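/- arXiv:1906.07430 — 2 statements merged into one kernel-verified Lean document; each statement's English description precedes it below -/
import Mathlib

section
/- If an undirected binary phylogenetic network N with distinguished edge e_ρ and reticulation set R is orientable, then the graph N − R obtained by deleting all vertices of R (and their incident edges) from N is a forest. -/
open Classical

/-- Indegree of a vertex in a digraph given by a relation. -/
noncomputable def inDeg {W : Type} (D : W → W → Prop) (b : W) : ℕ :=
  Nat.card {a : W // D a b}

/-- Outdegree of a vertex in a digraph given by a relation. -/
noncomputable def outDeg {W : Type} (D : W → W → Prop) (a : W) : ℕ :=
  Nat.card {b : W // D a b}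

/-- A digraph is acyclic if it has no directed cycle. -/
def DigraphAcyclic {W : Type} (D : W → W → Prop) : Prop :=
  ∀ a : W, ¬ Relation.TransGen D a a

/-- `D` is an orientation of the undirected graph `H`: every arc of `D` lies on an
edge of `H`, and every edge of `H` is given exactly one direction. -/
def IsOrientationOf {W : Type} (H : SimpleGraph W) (D : W → W → Prop) : Prop :=
  (∀ a b, D a b → H.Adj a b) ∧ (∀ a b, H.Adj a b → (D a b ↔ ¬ D b a))

/-- The graph obtained from `G` by subdividing the edge `{u,v}` with a new vertex
(represented by `none`). -/
def subdivide {V : Type} (G : SimpleGraph V) (u v : V) : SimpleGraph (Option V) where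
  Adj a b := match a, b with
    | some a', some b' => G.Adj a' b' ∧ ¬ (s(a', b') = s(u, v))
    | some a', none => a' = u ∨ a' = v
    | none, some b' => b' = u ∨ b' = v
    | none, none => False
  symm := by
    constructor
    intro a b h
    match a, b with
    | some a', some b' =>
        exact ⟨h.1.symm, fun he => h.2 (by rwa [Sym2.eq_swap] at he)⟩
    | some a', none => exact h
    | none, some b' => exact h
  loopless := by
    constructor
    intro a h
    match a with
    | some a' => exact G.ne_of_adj h.1 rfl
    | none => exact h

/-- An undirected binary phylogenetic network: a connected graph in which every
vertex has degree `1` (a leaf) or degree `3`. -/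
def IsUndirBinNet {V : Type} [Fintype V] (G : SimpleGraph V) [DecidableRel G.Adj] : Prop :=
  G.Connected ∧ ∀ w : V, G.degree w = 1 ∨ G.degree w = 3

/-- An orientation of the binary network `G` with root subdividing the edge `{u,v}`
and reticulation set `R`: an acyclic orientation of the subdivided graph in which
the root has indegree `0`, the vertices of `R` have indegree `2` and all other
vertices have indegree `1`. -/
def IsBinOrientation {V : Type} [Fintype V] (G : SimpleGraph V) (u v : V) (R : Set V)
    (D : Option V → Option V → Prop) : Prop :=
  IsOrientationOf (subdivide G u v) D ∧ DigraphAcyclic D ∧ inDeg D none = 0 ∧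
    ∀ w : V, (w ∈ R ↔ inDeg D (some w) = 2) ∧ (w ∉ R → inDeg D (some w) = 1)

/-! A cycle of `N − R` has a vertex `b` that is maximal for reachability in the orientation
among the vertices of the cycle. Neither cycle edge at `b` can then leave `b`, so both enter it,
from the neighbour itself or, on the edge `e_ρ`, from the root. These are two distinct
in-neighbours of `b ∉ R`, contradicting indegree `1`. -/

lemma two_le_inDeg {W : Type} [Finite W] {D : W → W → Prop} {w y z : W} (hyz : y ≠ z)
    (hy : D y w) (hz : D z w) : 2 ≤ inDeg D w :=
  Finite.one_lt_card_iff_nontrivial.mpr ⟨⟨y, hy⟩, ⟨z, hz⟩, fun h => hyz (congrArg Subtype.val h)⟩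

lemma not_rel_of_inDeg_eq_zero {W : Type} [Finite W] {D : W → W → Prop} {w : W}
    (h : inDeg D w = 0) (z : W) : ¬ D z w := fun hz =>
  (Nat.card_pos_iff.mpr ⟨⟨⟨z, hz⟩⟩, inferInstance⟩).ne' h

lemma DigraphAcyclic.comap {W W' : Type} {D : W → W → Prop} (hD : DigraphAcyclic D)
    (f : W' → W) : DigraphAcyclic (fun a b => D (f a) (f b)) := fun a h =>
  hD (f a) (Relation.TransGen.lift f (fun _ _ => id) a a h)

lemma DigraphAcyclic.exists_forall_not_rel {W : Type} [Finite W] {D : W → W → Prop}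
    (hD : DigraphAcyclic D) {s : Set W} (hs : s.Nonempty) : ∃ b ∈ s, ∀ t ∈ s, ¬ D b t := by
  have : IsTrans W (flip (Relation.TransGen D)) := ⟨fun _ _ _ h₁ h₂ => h₂.trans h₁⟩
  have : Std.Irrefl (flip (Relation.TransGen D)) := ⟨hD⟩
  obtain ⟨b, hb, hmax⟩ :=
    (Finite.wellFounded_of_trans_of_irrefl (flip (Relation.TransGen D))).has_min s hs
  exact ⟨b, hb, fun t ht hbt => hmax t ht (Relation.TransGen.single hbt)⟩

lemma SimpleGraph.Walk.IsCycle.exists_not_rel_neighbors {W : Type} [Finite W]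
    {H : SimpleGraph W} {D : W → W → Prop} (hD : DigraphAcyclic D) {a : W} {c : H.Walk a a}
    (hc : c.IsCycle) : ∃ b x y, x ≠ y ∧ H.Adj x b ∧ H.Adj y b ∧ ¬ D b x ∧ ¬ D b y := by
  obtain ⟨b, hb, hmax⟩ :=
    hD.exists_forall_not_rel (s := {t | t ∈ c.support}) ⟨a, c.start_mem_support⟩
  obtain ⟨x, y, hxy, hnbrs⟩ := Set.ncard_eq_two.mp (hc.ncard_neighborSet_toSubgraph_eq_two hb)
  have hx : x ∈ c.toSubgraph.neighborSet b := by simp [hnbrs]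
  have hy : y ∈ c.toSubgraph.neighborSet b := by simp [hnbrs]
  exact ⟨b, x, y, hxy, (c.toSubgraph.adj_sub hx).symm, (c.toSubgraph.adj_sub hy).symm,
    hmax x (c.mem_support_of_adj_toSubgraph hx.symm),
    hmax y (c.mem_support_of_adj_toSubgraph hy.symm)⟩

/-- The tail of the arc of `subdivide G u v` that enters `some b` along the edge `{x, b}` of `G`. -/
noncomputable def subdivideTail {V : Type} (u v x b : V) : Option V :=
  if s(x, b) = s(u, v) then none else some x

lemma subdivideTail_ne {V : Type} {u v x y b : V} (hxy : x ≠ y) :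
    subdivideTail u v x b ≠ subdivideTail u v y b := by
  unfold subdivideTail
  split_ifs with hx hy
  · exact fun _ => hxy (Sym2.congr_left.mp (hx.trans hy.symm))
  all_goals simp [hxy]

lemma IsOrientationOf.subdivideTail_rel {V : Type} {G : SimpleGraph V} {u v x b : V}
    {D : Option V → Option V → Prop} (hD : IsOrientationOf (subdivide G u v) D)
    (hroot : ∀ z, ¬ D z none) (hxb : G.Adj x b) (hbx : ¬ D (some b) (some x)) :
    D (subdivideTail u v x b) (some b) := by
  unfold subdivideTail
  split_ifs with he
  · have hb : b = u ∨ b = v := by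
      rcases Sym2.eq_iff.mp he with ⟨-, rfl⟩ | ⟨-, rfl⟩ <;> simp
    exact (hD.2 none (some b) hb).mpr (hroot _)
  · exact (hD.2 (some x) (some b) ⟨hxb, he⟩).mpr hbx

theorem forest_of_orientable_general {V : Type} [Fintype V]
    (G : SimpleGraph V) (u v : V) (R : Set V)
    (hor : ∃ D : Option V → Option V → Prop, IsBinOrientation G u v R D) :
    (G.induce (Rᶜ : Set V)).IsAcyclic := by
  obtain ⟨D, hD, hacyc, hroot, hdeg⟩ := hor
  intro a c hc
  obtain ⟨b, x, y, hxy, hxb, hyb, hbx, hby⟩ :=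
    hc.exists_not_rel_neighbors (hacyc.comap fun w : (Rᶜ : Set V) => some w.1)
  have hnone := not_rel_of_inDeg_eq_zero hroot
  have htwo : 2 ≤ inDeg D (some b.1) :=
    two_le_inDeg (subdivideTail_ne (Subtype.coe_ne_coe.mpr hxy))
      (hD.subdivideTail_rel hnone hxb hbx) (hD.subdivideTail_rel hnone hyb hby)
  have hone : inDeg D (some b.1) = 1 := (hdeg b).2 b.2
  omega

/-- If `(N, e_ρ, R)` is orientable, then `N − R` (the induced subgraph on the
complement of `R`) is a forest. -/
theorem forest_of_orientable {V X : Type} [Fintype V] [DecidableEq V]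
    (G : SimpleGraph V) [DecidableRel G.Adj] (hnet : IsUndirBinNet G)
    (labels : X ≃ {w : V // G.degree w = 1})
    (u v : V) (he : G.Adj u v) (R : Set V)
    (hor : ∃ D : Option V → Option V → Prop, IsBinOrientation G u v R D) :
    (G.induce (Rᶜ : Set V)).IsAcyclic :=
  forest_of_orientable_general G u v R hor
end

section
/- Let N be a directed binary phylogenetic network. If N is tree-child, then for every blob B of N the network induced by B is tree-child; conversely, if the network induced by every blob of N is tree-child, then N is tree-child. -/
open Classical

variable {A : Type} [DecidableEq A]

/-- The vertex set of a digraph given by a finite set of arcs. -/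
def verts (E : Finset (A × A)) : Finset A :=
  E.image Prod.fst ∪ E.image Prod.snd

/-- Outdegree of `a` in the arc set `E`. -/
def odeg (E : Finset (A × A)) (a : A) : ℕ := (E.filter fun p => p.1 = a).card

/-- Indegree of `a` in the arc set `E`. -/
def ideg (E : Finset (A × A)) (a : A) : ℕ := (E.filter fun p => p.2 = a).card

/-- The arc relation of `E`. -/
def Arc (E : Finset (A × A)) (a b : A) : Prop := (a, b) ∈ E

/-- `a` is a leaf of `E`: indegree `1` and outdegree `0`. -/
def IsLeafV (E : Finset (A × A)) (a : A) : Prop :=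
  a ∈ verts E ∧ ideg E a = 1 ∧ odeg E a = 0

/-- A directed binary phylogenetic network (leaves labelled by themselves):
an acyclic digraph with a unique root of indegree `0` and outdegree `2`, in which
every other vertex is a leaf (indegree `1`, outdegree `0`), a tree vertex
(indegree `1`, outdegree `2`) or a reticulation (indegree `2`, outdegree `1`). -/
def IsDirBinNet (E : Finset (A × A)) : Prop :=
  (∀ a : A, ¬ Relation.TransGen (Arc E) a a) ∧
  (∃! r : A, r ∈ verts E ∧ ideg E r = 0) ∧
  (∀ a ∈ verts E,
      (ideg E a = 0 ∧ odeg E a = 2) ∨ (ideg E a = 1 ∧ odeg E a = 0) ∨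
      (ideg E a = 1 ∧ odeg E a = 2) ∨ (ideg E a = 2 ∧ odeg E a = 1))

/-- Picking a cherry `{x,y}`: delete the leaf `y` and suppress its parent `p`
(with grandparent `g`). -/
def PickCherry (E E' : Finset (A × A)) : Prop :=
  ∃ x y p g : A, x ≠ y ∧ IsLeafV E x ∧ IsLeafV E y ∧
    (p, x) ∈ E ∧ (p, y) ∈ E ∧ (g, p) ∈ E ∧
    E' = insert (g, x) (((E.erase (p, x)).erase (p, y)).erase (g, p))

/-- Picking a reticulated cherry on leaves `x, y`: the parent `v` of `x` is a
reticulation, the parent `u` of `y` is a tree vertex with arc `(u,v)`; delete the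
arc `(u,v)` and suppress `u` and `v` (with `g` the parent of `u` and `w` the
other parent of `v`). -/
def PickRetCherry (E E' : Finset (A × A)) : Prop :=
  ∃ x y u v g w : A, IsLeafV E x ∧ IsLeafV E y ∧
    (v, x) ∈ E ∧ (u, y) ∈ E ∧ (u, v) ∈ E ∧ (w, v) ∈ E ∧ w ≠ u ∧ (g, u) ∈ E ∧
    ideg E v = 2 ∧ odeg E v = 1 ∧ ideg E u = 1 ∧ odeg E u = 2 ∧
    E' = insert (w, x) (insert (g, y)
      (((((E.erase (u, v)).erase (w, v)).erase (v, x)).erase (g, u)).erase (u, y)))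

/-- One picking step: a cherry or a reticulated cherry is picked. -/
def PickStep (E E' : Finset (A × A)) : Prop := PickCherry E E' ∨ PickRetCherry E E'

/-- A single cherry: a root with exactly two leaf children. -/
def IsSingleCherry (E : Finset (A × A)) : Prop :=
  ∃ r x y : A, r ≠ x ∧ r ≠ y ∧ x ≠ y ∧ E = {(r, x), (r, y)}

/-- An orchard network: reducible to a single cherry by picking cherries and
reticulated cherries. -/
def IsOrchard (E : Finset (A × A)) : Prop :=
  ∃ F : Finset (A × A), Relation.ReflTransGen PickStep E F ∧ IsSingleCherry F

/-- A tree-based network: it has a rooted spanning tree (an arborescence on all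
vertices, contained in the arc set) whose leaves are leaves of the network. -/
def IsTreeBased (E : Finset (A × A)) : Prop :=
  ∃ S : Finset (A × A), S ⊆ E ∧ verts S = verts E ∧
    (∃ r ∈ verts E, ideg S r = 0 ∧
      (∀ a ∈ verts E, a ≠ r → ideg S a = 1) ∧
      ∀ a ∈ verts E, Relation.ReflTransGen (Arc S) r a) ∧
    (∀ a ∈ verts E, odeg S a = 0 → odeg E a = 0)

/-- A network is tree-child if every non-leaf vertex has a child that is a tree
vertex (indegree `1`, outdegree `2`) or a leaf (indegree `1`, outdegree `0`). -/
def IsTreeChild (E : Finset (A × A)) : Prop :=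
  ∀ a ∈ verts E, odeg E a ≠ 0 →
    ∃ b : A, (a, b) ∈ E ∧
      ((ideg E b = 1 ∧ odeg E b = 2) ∨ (ideg E b = 1 ∧ odeg E b = 0))

/-- Underlying undirected adjacency of the arc set `E`. -/
def UAdj (E : Finset (A × A)) (a b : A) : Prop :=
  a ≠ b ∧ ((a, b) ∈ E ∨ (b, a) ∈ E)

/-- The (undirected) graph of `E` restricted to `S` is connected. -/
def ConnWithin (E : Finset (A × A)) (S : Finset A) : Prop :=
  ∀ a ∈ S, ∀ b ∈ S,
    Relation.ReflTransGen (fun x y => x ∈ S ∧ y ∈ S ∧ UAdj E x y) a b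

/-- `B` is a biconnected set of vertices of `E`: at least two vertices, connected,
and still connected after removing any single vertex. -/
def IsBiconnectedD (E : Finset (A × A)) (B : Finset A) : Prop :=
  B ⊆ verts E ∧ 2 ≤ B.card ∧ ConnWithin E B ∧ ∀ x ∈ B, ConnWithin E (B.erase x)

/-- A blob: a maximal biconnected set with at least three vertices. -/
def IsBlobD (E : Finset (A × A)) (B : Finset A) : Prop :=
  IsBiconnectedD E B ∧ (∀ B', IsBiconnectedD E B' → B ⊆ B' → B = B') ∧ 3 ≤ B.card

/-- The arcs of `E` lying inside `B`. -/
def arcsIn (E : Finset (A × A)) (B : Finset A) : Finset (A × A) :=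
  E.filter fun p => p.1 ∈ B ∧ p.2 ∈ B

/-- The network induced by the blob `B`, using `f` to supply the new pendant
leaves: for each vertex of `B` of indegree `1` and outdegree `1`, or indegree `2`
and outdegree `0`, within `B`, a pendant leaf is attached. -/
noncomputable def inducedBlobNet (E : Finset (A × A)) (B : Finset A) (f : A → A) :
    Finset (A × A) :=
  arcsIn E B ∪
    (B.filter fun a =>
        (ideg (arcsIn E B) a = 1 ∧ odeg (arcsIn E B) a = 1) ∨
        (ideg (arcsIn E B) a = 2 ∧ odeg (arcsIn E B) a = 0)).image
      fun a => (a, f a)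

/-- `f` supplies fresh pairwise-distinct leaf labels outside the network. -/
def FreshLeaves (E : Finset (A × A)) (B : Finset A) (f : A → A) : Prop :=
  Set.InjOn f (B : Set A) ∧ ∀ a ∈ B, f a ∉ verts E

/-!
Both directions are degree counts inside a blob `B`, resting on two facts. Every vertex of a
biconnected set with at least three vertices has two neighbours in it. A reticulation of a blob
has both parents in the blob: two internally disjoint directed paths from a common ancestor to
the two parents close up, through the reticulation, into a cycle; a cycle is biconnected, and a
biconnected set sharing two vertices with a blob lies inside it.

If `N` is tree-child, take a tree-child witness `c` of a vertex `v` of `B` that gets no pendant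
leaf. If `c ∈ B`, it is still a tree vertex or a leaf of the induced network. If `c ∉ B`, then `v`
is the root or a tree vertex with in- and outdegree at most one in `B`; having two neighbours in
`B`, it would have both equal to one and get a pendant leaf after all.
Conversely, if all children of a vertex `a` are reticulations, then in a blob containing `a` and a
child the tree-child witness of `a` must be its pendant leaf, so `a` has in- and outdegree one in
that blob. This excludes the root and reticulations, and for a tree vertex the blobs through its
two children share `a` and its parent, hence coincide and contain both children.
-/

lemma List.IsChain.reflTransGen_of_mem {α : Type*} {r : α → α → Prop} [Std.Symm r]
    {l : List α} (hl : l.IsChain r) {x y : α} (hx : x ∈ l) (hy : y ∈ l) :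
    Relation.ReflTransGen r x y := by
  have key := List.IsChain.induction (Relation.ReflTransGen r (l.head (List.ne_nil_of_mem hx)) ·)
    l hl (fun _ _ h ih => ih.tail h) (fun _ => .refl)
  exact (Std.Symm.symm _ _ (key x hx)).trans (key y hy)

section Arcs

variable {V : Type} {E : Finset (V × V)}

lemma UAdj.symm {a b : V} (h : UAdj E a b) : UAdj E b a :=
  ⟨h.1.symm, h.2.symm⟩

lemma ConnWithin.exists_uAdj {S : Finset V} (h : ConnWithin E S) {v u : V} (hv : v ∈ S)
    (hu : u ∈ S) (hne : v ≠ u) : ∃ w ∈ S, UAdj E v w := by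
  rcases (h v hv u hu).cases_head with h' | ⟨w, ⟨_, hwS, hadj⟩, _⟩
  · exact absurd h' hne
  · exact ⟨w, hwS, hadj⟩

lemma ne_of_mem_of_acyclic (hacyc : ∀ a : V, ¬ Relation.TransGen (Arc E) a a) {a b : V}
    (h : (a, b) ∈ E) : a ≠ b := by
  rintro rfl
  exact hacyc a (.single h)

lemma uAdj_of_mem (hacyc : ∀ a : V, ¬ Relation.TransGen (Arc E) a a) {a b : V}
    (h : (a, b) ∈ E) : UAdj E a b :=
  ⟨ne_of_mem_of_acyclic hacyc h, Or.inl h⟩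

def IsDirPath (E : Finset (V × V)) (z : V) (l : List V) (a : V) : Prop :=
  (z :: l).IsChain (Arc E) ∧ (z :: l).getLast (List.cons_ne_nil z l) = a

lemma exists_isDirPath {z a : V} (h : Relation.ReflTransGen (Arc E) z a) :
    ∃ l, IsDirPath E z l a :=
  List.exists_isChain_cons_of_relationReflTransGen h

lemma IsDirPath.suffix {z v a : V} {l₁ l₂ : List V} (h : IsDirPath E z (l₁ ++ v :: l₂) a) :
    IsDirPath E v l₂ a := by
  refine ⟨h.1.suffix ⟨z :: l₁, by simp⟩, ?_⟩
  rw [← h.2]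
  simp [List.getLast_append_of_ne_nil]

lemma IsDirPath.reflTransGen {z a x : V} {l : List V} (h : IsDirPath E z l a)
    (hx : x ∈ z :: l) : Relation.ReflTransGen (Arc E) x a :=
  List.IsChain.backwards_cons_induction (Relation.ReflTransGen (Arc E) · a) l h.1 h.2
    (fun _ _ hxy ih => ih.head hxy) .refl x hx

lemma IsDirPath.nodup (hacyc : ∀ a : V, ¬ Relation.TransGen (Arc E) a a) {z a : V} {l : List V}
    (h : IsDirPath E z l a) : (z :: l).Nodup :=
  (List.isChain_iff_pairwise.1 (h.1.imp fun _ _ => Relation.TransGen.single)).imp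
    fun {x y} (hxy : Relation.TransGen (Arc E) x y) (hx : x = y) => hacyc x (hx ▸ hxy)

lemma IsDirPath.mem_last {z a : V} {l : List V} (h : IsDirPath E z l a) : a ∈ z :: l :=
  h.2 ▸ List.getLast_mem _

lemma exists_disjoint_isDirPath {z a p : V} {l m : List V} (hl : IsDirPath E z l a)
    (hm : IsDirPath E z m p) :
    ∃ z l m, IsDirPath E z l a ∧ IsDirPath E z m p ∧ l.Disjoint m := by
  induction hn : l.length + m.length using Nat.strong_induction_on generalizing z l m with
  | _ n ih =>
    by_cases hdisj : l.Disjoint m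
    · exact ⟨z, l, m, hl, hm, hdisj⟩
    obtain ⟨v, hvl, hvm⟩ : ∃ v ∈ l, v ∈ m := by
      by_contra! h
      exact hdisj fun v hvl hvm => h v hvl hvm
    obtain ⟨l₁, l₂, rfl⟩ := List.append_of_mem hvl
    obtain ⟨m₁, m₂, rfl⟩ := List.append_of_mem hvm
    exact ih _ (by simp at hn ⊢; omega) hl.suffix hm.suffix rfl

end Arcs

section Degrees

variable {E : Finset (A × A)} {a b c u w : A}

lemma fst_mem_verts (h : (a, b) ∈ E) : a ∈ verts E := by
  simp only [verts, Finset.mem_union, Finset.mem_image]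
  exact Or.inl ⟨(a, b), h, rfl⟩

lemma snd_mem_verts (h : (a, b) ∈ E) : b ∈ verts E := by
  simp only [verts, Finset.mem_union, Finset.mem_image]
  exact Or.inr ⟨(a, b), h, rfl⟩

lemma odeg_pos_of_mem (h : (a, b) ∈ E) : 0 < odeg E a :=
  Finset.card_pos.2 ⟨(a, b), Finset.mem_filter.2 ⟨h, rfl⟩⟩

lemma ideg_pos_of_mem (h : (a, b) ∈ E) : 0 < ideg E b :=
  Finset.card_pos.2 ⟨(a, b), Finset.mem_filter.2 ⟨h, rfl⟩⟩

lemma exists_mem_of_odeg_ne_zero (h : odeg E a ≠ 0) : ∃ b, (a, b) ∈ E := by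
  obtain ⟨⟨x, b⟩, hp⟩ := Finset.card_pos.1 (Nat.pos_of_ne_zero h)
  obtain ⟨hE, rfl⟩ := Finset.mem_filter.1 hp
  exact ⟨b, hE⟩

lemma exists_mem_of_ideg_ne_zero (h : ideg E b ≠ 0) : ∃ a, (a, b) ∈ E := by
  obtain ⟨⟨a, x⟩, hp⟩ := Finset.card_pos.1 (Nat.pos_of_ne_zero h)
  obtain ⟨hE, rfl⟩ := Finset.mem_filter.1 hp
  exact ⟨a, hE⟩

lemma eq_of_ideg_eq_one (h : ideg E b = 1) (hu : (u, b) ∈ E) (hw : (w, b) ∈ E) : u = w :=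
  congrArg Prod.fst <| Finset.card_le_one.1 h.le _ (Finset.mem_filter.2 ⟨hu, rfl⟩) _
    (Finset.mem_filter.2 ⟨hw, rfl⟩)

lemma two_le_ideg (huw : u ≠ w) (hu : (u, b) ∈ E) (hw : (w, b) ∈ E) : 2 ≤ ideg E b :=
  Finset.one_lt_card.2 ⟨_, Finset.mem_filter.2 ⟨hu, rfl⟩, _, Finset.mem_filter.2 ⟨hw, rfl⟩,
    by simp [huw]⟩

lemma two_le_odeg (huw : u ≠ w) (hu : (a, u) ∈ E) (hw : (a, w) ∈ E) : 2 ≤ odeg E a :=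
  Finset.one_lt_card.2 ⟨_, Finset.mem_filter.2 ⟨hu, rfl⟩, _, Finset.mem_filter.2 ⟨hw, rfl⟩,
    by simp [huw]⟩

lemma exists_ne_mem_of_two_le_ideg (h : 2 ≤ ideg E b) (hu : (u, b) ∈ E) :
    ∃ w, w ≠ u ∧ (w, b) ∈ E := by
  obtain ⟨⟨w, x⟩, hw, hne⟩ := Finset.exists_mem_ne h (u, b)
  obtain ⟨hE, rfl⟩ := Finset.mem_filter.1 hw
  exact ⟨w, by simpa using hne, hE⟩

lemma exists_ne_mem_of_two_le_odeg (h : 2 ≤ odeg E a) (hu : (a, u) ∈ E) :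
    ∃ w, w ≠ u ∧ (a, w) ∈ E := by
  obtain ⟨⟨x, w⟩, hw, hne⟩ := Finset.exists_mem_ne h (a, u)
  obtain ⟨hE, rfl⟩ := Finset.mem_filter.1 hw
  exact ⟨w, by simpa using hne, hE⟩

lemma eq_or_eq_of_ideg_le_two (h : ideg E b ≤ 2) (huw : u ≠ w) (hu : (u, b) ∈ E)
    (hw : (w, b) ∈ E) (hc : (c, b) ∈ E) : c = u ∨ c = w := by
  by_contra! hne
  have hmem : ∀ {x}, (x, b) ∈ E → (x, b) ∈ E.filter (fun p => p.2 = b) :=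
    fun hx => Finset.mem_filter.2 ⟨hx, rfl⟩
  have : 2 < ideg E b := Finset.two_lt_card.2 ⟨(u, b), hmem hu, (w, b), hmem hw, (c, b), hmem hc,
    by simp [huw], by simp [hne.1.symm], by simp [hne.2.symm]⟩
  omega

end Degrees

section Connectivity

variable {E : Finset (A × A)}

lemma connWithin_of_isChain {l : List A} (hl : l.IsChain (UAdj E)) :
    ConnWithin E l.toFinset := by
  have : Std.Symm fun x y => x ∈ l.toFinset ∧ y ∈ l.toFinset ∧ UAdj E x y :=
    ⟨fun _ _ h => ⟨h.2.1, h.1, h.2.2.symm⟩⟩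
  intro x hx y hy
  refine (hl.imp_of_mem_imp fun a b ha hb hab => ?_).reflTransGen_of_mem
    (List.mem_toFinset.1 hx) (List.mem_toFinset.1 hy)
  exact ⟨List.mem_toFinset.2 ha, List.mem_toFinset.2 hb, hab⟩

lemma ConnWithin.union {S T : Finset A} (hS : ConnWithin E S) (hT : ConnWithin E T) {w : A}
    (hwS : w ∈ S) (hwT : w ∈ T) : ConnWithin E (S ∪ T) := by
  have lift : ∀ {U : Finset A}, U ⊆ S ∪ T → ConnWithin E U → ∀ ⦃a b⦄, a ∈ U → b ∈ U →
      Relation.ReflTransGen (fun x y => x ∈ S ∪ T ∧ y ∈ S ∪ T ∧ UAdj E x y) a b :=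
    fun hU hconn _ _ ha hb =>
      Relation.ReflTransGen.mono (fun _ _ h => ⟨hU h.1, hU h.2.1, h.2.2⟩) _ _ (hconn _ ha _ hb)
  have liftS := lift Finset.subset_union_left hS
  have liftT := lift Finset.subset_union_right hT
  intro a ha b hb
  rcases Finset.mem_union.1 ha with ha | ha <;> rcases Finset.mem_union.1 hb with hb | hb
  · exact liftS ha hb
  · exact (liftS ha hwS).trans (liftT hwT hb)
  · exact (liftT ha hwT).trans (liftS hwS hb)
  · exact liftT ha hb

lemma ConnWithin.subset_verts {S : Finset A} (h : ConnWithin E S) (h2 : 2 ≤ S.card) :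
    S ⊆ verts E := by
  intro v hv
  obtain ⟨u, hu, hne⟩ := Finset.exists_mem_ne (show 1 < S.card by omega) v
  obtain ⟨w, _, _, hvw | hwv⟩ := h.exists_uAdj hv hu hne.symm
  · exact fst_mem_verts hvw
  · exact snd_mem_verts hwv

lemma isBiconnectedD_of_cycle {l : List A} (hl : Cycle.Chain (UAdj E) (l : Cycle A))
    (hnd : l.Nodup) (h2 : 2 ≤ l.length) : IsBiconnectedD E l.toFinset := by
  -- rotated to start at `x`, the cycle minus `x` is a path through all other vertices
  have rotate : ∀ x ∈ l, ∃ m : List A, (x :: m).IsChain (UAdj E) ∧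
      m.toFinset = l.toFinset.erase x := by
    intro x hx
    obtain ⟨l₁, l₂, rfl⟩ := List.append_of_mem hx
    have hrot : ((l₁ ++ x :: l₂ : List A) : Cycle A) = (x :: (l₂ ++ l₁) : List A) :=
      Cycle.coe_eq_coe.2 (by simpa using List.isRotated_append (l := l₁) (l' := x :: l₂))
    rw [hrot, Cycle.chain_coe_cons] at hl
    refine ⟨l₂ ++ l₁, hl.left_of_append, ?_⟩
    have hx : x ∉ l₁ ++ l₂ := (List.nodup_cons.1 (List.nodup_middle.1 hnd)).1
    have hx₁ : x ∉ l₁ := fun h => hx (by simp [h])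
    have hx₂ : x ∉ l₂ := fun h => hx (by simp [h])
    ext y
    by_cases hy : y = x <;> simp [hy, hx₁, hx₂, or_comm]
  have hcard : l.toFinset.card = l.length := List.toFinset_card_of_nodup hnd
  obtain ⟨x, hx⟩ := List.exists_mem_of_length_pos (by omega : 0 < l.length)
  have hconn : ConnWithin E l.toFinset := by
    obtain ⟨m, hm, hmx⟩ := rotate x hx
    have : (x :: m).toFinset = l.toFinset := by
      rw [List.toFinset_cons, hmx, Finset.insert_erase (List.mem_toFinset.2 hx)]
    exact this ▸ connWithin_of_isChain hm
  refine ⟨hconn.subset_verts (by omega), by omega, hconn, fun y hy => ?_⟩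
  obtain ⟨m, hm, hmy⟩ := rotate y (List.mem_toFinset.1 hy)
  exact hmy ▸ connWithin_of_isChain hm.tail

end Connectivity

section Network

variable {E : Finset (A × A)}

lemma wellFounded_transGen_arc (hacyc : ∀ a : A, ¬ Relation.TransGen (Arc E) a a) :
    WellFounded (Relation.TransGen (Arc E)) := by
  let ancestors : A → Finset A := fun v => (verts E).filter (Relation.TransGen (Arc E) · v)
  refine Subrelation.wf (r := InvImage (· < ·) fun v => (ancestors v).card) ?_
    (InvImage.wf _ wellFounded_lt)
  intro x y hxy
  obtain ⟨c, hxc, -⟩ := Relation.TransGen.head'_iff.1 hxy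
  refine Finset.card_lt_card ((Finset.ssubset_iff_of_subset ?_).2 ⟨x, ?_, ?_⟩)
  · intro u hu
    simp only [ancestors, Finset.mem_filter] at hu ⊢
    exact ⟨hu.1, hu.2.trans hxy⟩
  · exact Finset.mem_filter.2 ⟨fst_mem_verts hxc, hxy⟩
  · exact fun hx => hacyc x (Finset.mem_filter.1 hx).2

lemma exists_reflTransGen_root (hacyc : ∀ a : A, ¬ Relation.TransGen (Arc E) a a)
    (hroot : ∃! r : A, r ∈ verts E ∧ ideg E r = 0) :
    ∃ r, ∀ v ∈ verts E, Relation.ReflTransGen (Arc E) r v := by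
  obtain ⟨r, -, huniq⟩ := hroot
  refine ⟨r, fun v hv => ?_⟩
  obtain ⟨u, ⟨huv, hu⟩, hmin⟩ := (wellFounded_transGen_arc hacyc).has_min
    {u | Relation.ReflTransGen (Arc E) u v ∧ u ∈ verts E} ⟨v, .refl, hv⟩
  suffices ideg E u = 0 from huniq u ⟨hu, this⟩ ▸ huv
  by_contra h0
  obtain ⟨w, hwu⟩ := exists_mem_of_ideg_ne_zero h0
  exact hmin w ⟨huv.head hwu, fst_mem_verts hwu⟩ (.single hwu)

lemma isBiconnectedD_of_isDirPath (hacyc : ∀ a : A, ¬ Relation.TransGen (Arc E) a a)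
    {z a p b : A} {l m : List A} (hl : IsDirPath E z l a) (hm : IsDirPath E z m p)
    (hdisj : l.Disjoint m) (hab : (a, b) ∈ E) (hpb : (p, b) ∈ E) :
    IsBiconnectedD E (z :: (l ++ b :: m.reverse)).toFinset := by
  have hbl : b ∉ z :: l := fun h => hacyc b (.tail' (hl.reflTransGen h) hab)
  have hbm : b ∉ z :: m := fun h => hacyc b (.tail' (hm.reflTransGen h) hpb)
  have hchain : Cycle.Chain (UAdj E) (z :: (l ++ b :: m.reverse) : List A) := by
    rw [Cycle.chain_coe_cons, show z :: (l ++ b :: m.reverse ++ [z]) =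
      (z :: l) ++ b :: (z :: m).reverse by simp]
    refine (hl.1.imp fun _ _ => uAdj_of_mem hacyc).append (List.isChain_cons.2
      ⟨?_, List.isChain_reverse.2 (hm.1.imp fun _ _ h => (uAdj_of_mem hacyc h).symm)⟩) ?_
    · rw [List.head?_reverse, List.getLast?_eq_some_getLast (List.cons_ne_nil z m), hm.2]
      simpa using (uAdj_of_mem hacyc hpb).symm
    · rw [List.getLast?_eq_some_getLast (List.cons_ne_nil z l), hl.2]
      simpa using uAdj_of_mem hacyc hab
  have hnodup : (z :: (l ++ b :: m.reverse)).Nodup := by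
    rw [← List.cons_append, List.nodup_append]
    have hzm := List.nodup_cons.1 (hm.nodup hacyc)
    refine ⟨hl.nodup hacyc, List.nodup_cons.2 ⟨fun h => hbm (by simp_all), by simpa using hzm.2⟩,
      ?_⟩
    rintro x hx y hy rfl
    rcases List.mem_cons.1 hy with rfl | hy
    · exact hbl hx
    · rcases List.mem_cons.1 hx with rfl | hx
      · exact hzm.1 (List.mem_reverse.1 hy)
      · exact hdisj hx (List.mem_reverse.1 hy)
  exact isBiconnectedD_of_cycle hchain hnodup (by simp; omega)

lemma exists_biconnected_of_mem_of_mem (hacyc : ∀ a : A, ¬ Relation.TransGen (Arc E) a a)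
    (hroot : ∃! r : A, r ∈ verts E ∧ ideg E r = 0) {a p b : A} (hab : (a, b) ∈ E)
    (hpb : (p, b) ∈ E) : ∃ C, IsBiconnectedD E C ∧ a ∈ C ∧ p ∈ C ∧ b ∈ C := by
  obtain ⟨r, hr⟩ := exists_reflTransGen_root hacyc hroot
  obtain ⟨l, hl⟩ := exists_isDirPath (hr a (fst_mem_verts hab))
  obtain ⟨m, hm⟩ := exists_isDirPath (hr p (fst_mem_verts hpb))
  obtain ⟨z, l, m, hl, hm, hdisj⟩ := exists_disjoint_isDirPath hl hm
  refine ⟨_, isBiconnectedD_of_isDirPath hacyc hl hm hdisj hab hpb, ?_, ?_, by simp⟩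
  · exact List.mem_toFinset.2 (List.mem_append_left _ hl.mem_last)
  · have := hm.mem_last
    simp only [List.mem_cons] at this
    simp only [List.mem_toFinset, List.mem_cons, List.mem_append, List.mem_reverse]
    tauto

end Network

section Blobs

variable {E : Finset (A × A)} {B C : Finset A}

lemma mem_arcsIn {x y : A} : (x, y) ∈ arcsIn E B ↔ (x, y) ∈ E ∧ x ∈ B ∧ y ∈ B :=
  Finset.mem_filter

lemma ideg_arcsIn_le (v : A) : ideg (arcsIn E B) v ≤ ideg E v :=
  Finset.card_le_card (Finset.filter_subset_filter _ (Finset.filter_subset _ _))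

lemma odeg_arcsIn_le (v : A) : odeg (arcsIn E B) v ≤ odeg E v :=
  Finset.card_le_card (Finset.filter_subset_filter _ (Finset.filter_subset _ _))

lemma odeg_arcsIn_lt {v c : A} (hvc : (v, c) ∈ E) (hc : c ∉ B) :
    odeg (arcsIn E B) v < odeg E v := by
  refine Finset.card_lt_card ((Finset.ssubset_iff_of_subset
    (Finset.filter_subset_filter _ (Finset.filter_subset _ _))).2 ⟨(v, c), ?_, ?_⟩)
  · exact Finset.mem_filter.2 ⟨hvc, rfl⟩
  · simp [hc]

lemma IsBiconnectedD.union (hB : IsBiconnectedD E B) (hC : IsBiconnectedD E C) {x y : A}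
    (hxB : x ∈ B) (hxC : x ∈ C) (hyB : y ∈ B) (hyC : y ∈ C) (hxy : x ≠ y) :
    IsBiconnectedD E (B ∪ C) := by
  refine ⟨Finset.union_subset hB.1 hC.1,
    hB.2.1.trans (Finset.card_le_card Finset.subset_union_left), hB.2.2.1.union hC.2.2.1 hxB hxC, fun z _ => ?_⟩
  have erase_conn : ∀ {D : Finset A}, IsBiconnectedD E D → ConnWithin E (D.erase z) := by
    intro D hD
    by_cases hzD : z ∈ D
    · exact hD.2.2.2 z hzD
    · rw [Finset.erase_eq_of_notMem hzD]
      exact hD.2.2.1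
  obtain ⟨w, hwB, hwC, hwz⟩ : ∃ w, w ∈ B ∧ w ∈ C ∧ w ≠ z := by
    by_cases hxz : x = z
    · exact ⟨y, hyB, hyC, hxz ▸ hxy.symm⟩
    · exact ⟨x, hxB, hxC, hxz⟩
  rw [Finset.erase_union_distrib]
  exact (erase_conn hB).union (erase_conn hC) (Finset.mem_erase.2 ⟨hwz, hwB⟩)
    (Finset.mem_erase.2 ⟨hwz, hwC⟩)

lemma IsBiconnectedD.exists_isBlobD_superset (hC : IsBiconnectedD E C) (h3 : 3 ≤ C.card) :
    ∃ B, IsBlobD E B ∧ C ⊆ B := by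
  let candidates := (verts E).powerset.filter fun B => IsBiconnectedD E B ∧ C ⊆ B
  have mem_candidates : ∀ {B}, IsBiconnectedD E B → C ⊆ B → B ∈ candidates :=
    fun hB hCB => Finset.mem_filter.2 ⟨Finset.mem_powerset.2 hB.1, hB, hCB⟩
  obtain ⟨B, hB, hmax⟩ := Finset.exists_max_image candidates Finset.card
    ⟨C, mem_candidates hC subset_rfl⟩
  obtain ⟨-, hB, hCB⟩ := Finset.mem_filter.1 hB
  refine ⟨B, ⟨hB, fun B' hB' hBB' => ?_, h3.trans (Finset.card_le_card hCB)⟩, hCB⟩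
  exact Finset.eq_of_subset_of_card_le hBB' (hmax B' (mem_candidates hB' (hCB.trans hBB')))

lemma IsBlobD.subset_of_isBiconnectedD (hB : IsBlobD E B) (hC : IsBiconnectedD E C) {x y : A}
    (hxB : x ∈ B) (hxC : x ∈ C) (hyB : y ∈ B) (hyC : y ∈ C) (hxy : x ≠ y) : C ⊆ B := by
  rw [hB.2.1 _ (hB.1.union hC hxB hxC hyB hyC hxy) Finset.subset_union_left]
  exact Finset.subset_union_right

lemma IsBiconnectedD.exists_two_uAdj (hB : IsBiconnectedD E B) (h3 : 3 ≤ B.card) {v : A}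
    (hv : v ∈ B) : ∃ w₁ ∈ B, ∃ w₂ ∈ B, w₁ ≠ w₂ ∧ UAdj E v w₁ ∧ UAdj E v w₂ := by
  obtain ⟨-, -, hconn, herase⟩ := hB
  obtain ⟨u, hu, hne⟩ := Finset.exists_mem_ne (by omega : 1 < B.card) v
  obtain ⟨w₁, hw₁, hvw₁⟩ := hconn.exists_uAdj hv hu hne.symm
  have hv' : v ∈ B.erase w₁ := Finset.mem_erase.2 ⟨hvw₁.1, hv⟩
  obtain ⟨u', hu', hne'⟩ := Finset.exists_mem_ne
    (by rw [Finset.card_erase_of_mem hw₁]; omega : 1 < (B.erase w₁).card) v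
  obtain ⟨w₂, hw₂, hvw₂⟩ := (herase w₁ hw₁).exists_uAdj hv' hu' hne'.symm
  exact ⟨w₁, hw₁, w₂, Finset.mem_of_mem_erase hw₂, (Finset.ne_of_mem_erase hw₂).symm, hvw₁, hvw₂⟩

lemma IsBiconnectedD.two_le_ideg_add_odeg (hB : IsBiconnectedD E B) (h3 : 3 ≤ B.card) {v : A}
    (hv : v ∈ B) : 2 ≤ ideg (arcsIn E B) v + odeg (arcsIn E B) v := by
  obtain ⟨w₁, hw₁, w₂, hw₂, hne, ⟨-, h₁ | h₁⟩, ⟨-, h₂ | h₂⟩⟩ := hB.exists_two_uAdj h3 hv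
  · exact le_add_left (two_le_odeg hne (mem_arcsIn.2 ⟨h₁, hv, hw₁⟩) (mem_arcsIn.2 ⟨h₂, hv, hw₂⟩))
  · exact Nat.add_le_add (ideg_pos_of_mem (mem_arcsIn.2 ⟨h₂, hw₂, hv⟩))
      (odeg_pos_of_mem (mem_arcsIn.2 ⟨h₁, hv, hw₁⟩))
  · exact Nat.add_le_add (ideg_pos_of_mem (mem_arcsIn.2 ⟨h₁, hw₁, hv⟩))
      (odeg_pos_of_mem (mem_arcsIn.2 ⟨h₂, hv, hw₂⟩))
  · exact le_add_right (two_le_ideg hne (mem_arcsIn.2 ⟨h₁, hw₁, hv⟩) (mem_arcsIn.2 ⟨h₂, hw₂, hv⟩))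

lemma IsBlobD.ideg_arcsIn_eq_two (hacyc : ∀ a : A, ¬ Relation.TransGen (Arc E) a a)
    (hroot : ∃! r : A, r ∈ verts E ∧ ideg E r = 0) (hB : IsBlobD E B) {b : A} (hbB : b ∈ B)
    (hi : ideg E b = 2) (ho : odeg E b = 1) : ideg (arcsIn E B) b = 2 := by
  obtain ⟨q, hqb⟩ : ∃ q, (q, b) ∈ arcsIn E B := by
    have := hB.1.two_le_ideg_add_odeg hB.2.2 hbB
    have := odeg_arcsIn_le (E := E) (B := B) b
    exact exists_mem_of_ideg_ne_zero (by omega)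
  obtain ⟨hqb, hqB, -⟩ := mem_arcsIn.1 hqb
  obtain ⟨u, hub⟩ := exists_mem_of_ideg_ne_zero (E := E) (b := b) (by omega)
  obtain ⟨p, hpu, hpb⟩ := exists_ne_mem_of_two_le_ideg hi.ge hub
  obtain ⟨C, hC, huC, hpC, hbC⟩ := exists_biconnected_of_mem_of_mem hacyc hroot hub hpb
  have hqC : q ∈ C := by
    rcases eq_or_eq_of_ideg_le_two hi.le hpu.symm hub hpb hqb with rfl | rfl
    exacts [huC, hpC]
  have hCB := hB.subset_of_isBiconnectedD hC hqB hqC hbB hbC (ne_of_mem_of_acyclic hacyc hqb)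
  have := two_le_ideg hpu.symm (mem_arcsIn.2 ⟨hub, hCB huC, hbB⟩) (mem_arcsIn.2 ⟨hpb, hCB hpC, hbB⟩)
  have := ideg_arcsIn_le (E := E) (B := B) b
  omega

lemma exists_isBlobD_of_ideg_eq_two (hacyc : ∀ a : A, ¬ Relation.TransGen (Arc E) a a)
    (hroot : ∃! r : A, r ∈ verts E ∧ ideg E r = 0) {a b : A} (hab : (a, b) ∈ E)
    (hb : ideg E b = 2) : ∃ B, IsBlobD E B ∧ a ∈ B ∧ b ∈ B := by
  obtain ⟨p, hpa, hpb⟩ := exists_ne_mem_of_two_le_ideg hb.ge hab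
  obtain ⟨C, hC, haC, hpC, hbC⟩ := exists_biconnected_of_mem_of_mem hacyc hroot hab hpb
  have h3 : 2 < C.card := Finset.two_lt_card.2 ⟨a, haC, p, hpC, b, hbC, hpa.symm,
    ne_of_mem_of_acyclic hacyc hab, ne_of_mem_of_acyclic hacyc hpb⟩
  obtain ⟨B, hB, hCB⟩ := hC.exists_isBlobD_superset h3
  exact ⟨B, hB, hCB haC, hCB hbC⟩

end Blobs

def IsTreeOrLeaf (E : Finset (A × A)) (b : A) : Prop :=
  (ideg E b = 1 ∧ odeg E b = 2) ∨ (ideg E b = 1 ∧ odeg E b = 0)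

def GetsPendantLeaf (E : Finset (A × A)) (B : Finset A) (a : A) : Prop :=
  (ideg (arcsIn E B) a = 1 ∧ odeg (arcsIn E B) a = 1) ∨
    (ideg (arcsIn E B) a = 2 ∧ odeg (arcsIn E B) a = 0)

section InducedNet

variable {E : Finset (A × A)} {B : Finset A} {f : A → A} {v : A}

lemma mem_inducedBlobNet {x y : A} :
    (x, y) ∈ inducedBlobNet E B f ↔
      (x, y) ∈ arcsIn E B ∨ (x ∈ B ∧ GetsPendantLeaf E B x ∧ y = f x) := by
  simp only [inducedBlobNet, GetsPendantLeaf, Finset.mem_union, Finset.mem_image,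
    Finset.mem_filter, Prod.mk.injEq]
  constructor
  · rintro (h | ⟨a, ha, rfl, rfl⟩)
    exacts [Or.inl h, Or.inr ⟨ha.1, ha.2, rfl⟩]
  · rintro (h | ⟨hx, hg, rfl⟩)
    exacts [Or.inl h, Or.inr ⟨x, ⟨hx, hg⟩, rfl, rfl⟩]

lemma FreshLeaves.apply_not_mem (hfr : FreshLeaves E B f) (hBv : B ⊆ verts E) (hv : v ∈ B) :
    f v ∉ B :=
  fun h => hfr.2 v hv (hBv h)

lemma ideg_inducedBlobNet_of_mem (hfr : FreshLeaves E B f) (hBv : B ⊆ verts E) (hv : v ∈ B) :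
    ideg (inducedBlobNet E B f) v = ideg (arcsIn E B) v := by
  unfold ideg
  congr 1
  ext ⟨x, y⟩
  simp only [Finset.mem_filter, mem_inducedBlobNet]
  constructor
  · rintro ⟨h | ⟨hx, -, rfl⟩, rfl⟩
    exacts [⟨h, rfl⟩, absurd hv (hfr.apply_not_mem hBv hx)]
  · exact fun ⟨h, hy⟩ => ⟨Or.inl h, hy⟩

lemma ideg_inducedBlobNet_apply (hfr : FreshLeaves E B f) (hBv : B ⊆ verts E) (hv : v ∈ B)
    (hg : GetsPendantLeaf E B v) : ideg (inducedBlobNet E B f) (f v) = 1 := by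
  rw [ideg, Finset.card_eq_one]
  refine ⟨(v, f v), Finset.eq_singleton_iff_unique_mem.2 ⟨?_, ?_⟩⟩
  · exact Finset.mem_filter.2 ⟨mem_inducedBlobNet.2 (Or.inr ⟨hv, hg, rfl⟩), rfl⟩
  · rintro ⟨x, y⟩ hxy
    obtain ⟨h, hy⟩ := Finset.mem_filter.1 hxy
    rcases mem_inducedBlobNet.1 h with h | ⟨hx, -, rfl⟩
    · exact absurd (hy ▸ (mem_arcsIn.1 h).2.2) (hfr.apply_not_mem hBv hv)
    · rw [hfr.1 hx hv hy]

lemma odeg_inducedBlobNet_of_not_mem (hv : v ∉ B) : odeg (inducedBlobNet E B f) v = 0 := by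
  refine Finset.card_eq_zero.2 (Finset.eq_empty_of_forall_notMem ?_)
  rintro ⟨x, y⟩ hxy
  obtain ⟨h, rfl⟩ := Finset.mem_filter.1 hxy
  rcases mem_inducedBlobNet.1 h with h | ⟨hx, -⟩
  exacts [hv (mem_arcsIn.1 h).2.1, hv hx]

lemma odeg_inducedBlobNet_of_mem (hfr : FreshLeaves E B f) (hBv : B ⊆ verts E) (hv : v ∈ B) :
    odeg (inducedBlobNet E B f) v =
      odeg (arcsIn E B) v + if GetsPendantLeaf E B v then 1 else 0 := by
  unfold odeg
  split_ifs with hg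
  · have hnew : (v, f v) ∉ (arcsIn E B).filter fun p => p.1 = v :=
      fun h => hfr.apply_not_mem hBv hv (mem_arcsIn.1 (Finset.mem_filter.1 h).1).2.2
    rw [← Finset.card_insert_of_notMem hnew]
    congr 1
    ext ⟨x, y⟩
    simp only [Finset.mem_filter, mem_inducedBlobNet, Finset.mem_insert, Prod.mk.injEq]
    constructor
    · rintro ⟨h | ⟨-, -, rfl⟩, rfl⟩
      exacts [Or.inr ⟨h, rfl⟩, Or.inl ⟨rfl, rfl⟩]
    · rintro (⟨rfl, rfl⟩ | ⟨h, rfl⟩)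
      exacts [⟨Or.inr ⟨hv, hg, rfl⟩, rfl⟩, ⟨Or.inl h, rfl⟩]
  · rw [add_zero]
    congr 1
    ext ⟨x, y⟩
    simp only [Finset.mem_filter, mem_inducedBlobNet]
    constructor
    · rintro ⟨h | ⟨-, hg', rfl⟩, rfl⟩
      exacts [⟨h, rfl⟩, absurd hg' hg]
    · exact fun ⟨h, hx⟩ => ⟨Or.inl h, hx⟩

lemma isTreeOrLeaf_inducedBlobNet_apply (hfr : FreshLeaves E B f) (hBv : B ⊆ verts E)
    (hv : v ∈ B) (hg : GetsPendantLeaf E B v) : IsTreeOrLeaf (inducedBlobNet E B f) (f v) :=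
  Or.inr ⟨ideg_inducedBlobNet_apply hfr hBv hv hg,
    odeg_inducedBlobNet_of_not_mem (hfr.apply_not_mem hBv hv)⟩

lemma isTreeOrLeaf_inducedBlobNet_of_mem (hfr : FreshLeaves E B f) (hBv : B ⊆ verts E) {c : A}
    (hvc : (v, c) ∈ arcsIn E B) (hc : IsTreeOrLeaf E c) :
    IsTreeOrLeaf (inducedBlobNet E B f) c := by
  have hcB := (mem_arcsIn.1 hvc).2.2
  have := ideg_pos_of_mem hvc
  have := ideg_arcsIn_le (E := E) (B := B) c
  have := odeg_arcsIn_le (E := E) (B := B) c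
  unfold IsTreeOrLeaf at hc ⊢
  rw [ideg_inducedBlobNet_of_mem hfr hBv hcB, odeg_inducedBlobNet_of_mem hfr hBv hcB]
  split_ifs with hg <;> unfold GetsPendantLeaf at hg <;> omega

theorem isTreeChild_inducedBlobNet (hnet : IsDirBinNet E) (hTC : IsTreeChild E)
    (hB : IsBiconnectedD E B) (h3 : 3 ≤ B.card) (hfr : FreshLeaves E B f) :
    IsTreeChild (inducedBlobNet E B f) := by
  intro v _ hoN
  have hvB : v ∈ B := by
    by_contra hvB
    exact hoN (odeg_inducedBlobNet_of_not_mem hvB)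
  by_cases hg : GetsPendantLeaf E B v
  · exact ⟨f v, mem_inducedBlobNet.2 (Or.inr ⟨hvB, hg, rfl⟩),
      isTreeOrLeaf_inducedBlobNet_apply hfr hB.1 hvB hg⟩
  rw [odeg_inducedBlobNet_of_mem hfr hB.1 hvB, if_neg hg, add_zero] at hoN
  obtain ⟨d, hd⟩ := exists_mem_of_odeg_ne_zero hoN
  obtain ⟨c, hcE, hc⟩ := hTC v (hB.1 hvB) (odeg_pos_of_mem (mem_arcsIn.1 hd).1).ne'
  by_cases hcB : c ∈ B
  · have hvc : (v, c) ∈ arcsIn E B := mem_arcsIn.2 ⟨hcE, hvB, hcB⟩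
    exact ⟨c, mem_inducedBlobNet.2 (Or.inl hvc), isTreeOrLeaf_inducedBlobNet_of_mem hfr hB.1 hvc hc⟩
  -- otherwise `v` has too few neighbours in `B`: the arc to `c` leaves `B`
  exfalso
  have := odeg_arcsIn_lt hcE hcB
  have := ideg_arcsIn_le (E := E) (B := B) v
  have := hB.two_le_ideg_add_odeg h3 hvB
  have := hnet.2.2 v (hB.1 hvB)
  unfold GetsPendantLeaf at hg
  omega

end InducedNet

section BlobDetermined

variable {E : Finset (A × A)}

lemma IsBlobD.ideg_odeg_arcsIn_of_reticulate_children
    (hacyc : ∀ a : A, ¬ Relation.TransGen (Arc E) a a)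
    (hroot : ∃! r : A, r ∈ verts E ∧ ideg E r = 0) {B : Finset A} (hB : IsBlobD E B)
    {f : A → A} (hfr : FreshLeaves E B f) (hTC : IsTreeChild (inducedBlobNet E B f))
    {a b : A} (hab : (a, b) ∈ arcsIn E B)
    (hret : ∀ c, (a, c) ∈ E → ideg E c = 2 ∧ odeg E c = 1) :
    ideg (arcsIn E B) a = 1 ∧ odeg (arcsIn E B) a = 1 := by
  have habN : (a, b) ∈ inducedBlobNet E B f := mem_inducedBlobNet.2 (Or.inl hab)
  obtain ⟨x, haxN, hx⟩ := hTC a (fst_mem_verts habN) (odeg_pos_of_mem habN).ne'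
  rcases mem_inducedBlobNet.1 haxN with hax | ⟨-, hg, -⟩
  · exfalso
    obtain ⟨haxE, -, hxB⟩ := mem_arcsIn.1 hax
    have := hB.ideg_arcsIn_eq_two hacyc hroot hxB (hret x haxE).1 (hret x haxE).2
    rw [← ideg_inducedBlobNet_of_mem hfr hB.1.1 hxB] at this
    omega
  · have := odeg_pos_of_mem hab
    unfold GetsPendantLeaf at hg
    omega

lemma exists_isBlobD_ideg_odeg_arcsIn_of_reticulate_children (hnet : IsDirBinNet E)
    (H : ∀ B : Finset A, IsBlobD E B →
      ∃ f : A → A, FreshLeaves E B f ∧ IsTreeChild (inducedBlobNet E B f))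
    {a b : A} (hab : (a, b) ∈ E) (hret : ∀ c, (a, c) ∈ E → ideg E c = 2 ∧ odeg E c = 1) :
    ∃ B, IsBlobD E B ∧ a ∈ B ∧ b ∈ B ∧ ideg (arcsIn E B) a = 1 ∧ odeg (arcsIn E B) a = 1 := by
  obtain ⟨B, hB, haB, hbB⟩ := exists_isBlobD_of_ideg_eq_two hnet.1 hnet.2.1 hab (hret b hab).1
  obtain ⟨f, hfr, hTC⟩ := H B hB
  exact ⟨B, hB, haB, hbB, hB.ideg_odeg_arcsIn_of_reticulate_children hnet.1 hnet.2.1 hfr hTC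
    (mem_arcsIn.2 ⟨hab, haB, hbB⟩) hret⟩

theorem isTreeChild_of_isTreeChild_inducedBlobNet (hnet : IsDirBinNet E)
    (H : ∀ B : Finset A, IsBlobD E B →
      ∃ f : A → A, FreshLeaves E B f ∧ IsTreeChild (inducedBlobNet E B f)) :
    IsTreeChild E := by
  intro a ha hoa
  by_contra hno
  have hret : ∀ c, (a, c) ∈ E → ideg E c = 2 ∧ odeg E c = 1 := by
    intro c hac
    have : ¬ IsTreeOrLeaf E c := fun hc => hno ⟨c, hac, hc⟩
    unfold IsTreeOrLeaf at this
    have := ideg_pos_of_mem hac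
    have := hnet.2.2 c (snd_mem_verts hac)
    omega
  obtain ⟨b, hab⟩ := exists_mem_of_odeg_ne_zero hoa
  obtain ⟨B, hB, haB, hbB, hi, ho⟩ :=
    exists_isBlobD_ideg_odeg_arcsIn_of_reticulate_children hnet H hab hret
  have := ideg_arcsIn_le (E := E) (B := B) a
  rcases hnet.2.2 a ha with ⟨hi0, -⟩ | ⟨-, ho0⟩ | ⟨hi1, ho2⟩ | ⟨hi2, ho1⟩
  · omega
  · exact hoa ho0
  · -- the blob through the other child `c` shares `a` and its parent with `B`, so `c ∈ B`
    obtain ⟨c, hcb, hac⟩ := exists_ne_mem_of_two_le_odeg ho2.ge hab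
    obtain ⟨B', hB', haB', hcB', hi', -⟩ :=
      exists_isBlobD_ideg_odeg_arcsIn_of_reticulate_children hnet H hac hret
    obtain ⟨q, hq⟩ := exists_mem_of_ideg_ne_zero (E := arcsIn E B) (b := a) (by omega)
    obtain ⟨q', hq'⟩ := exists_mem_of_ideg_ne_zero (E := arcsIn E B') (b := a) (by omega)
    obtain ⟨hqa, hqB, -⟩ := mem_arcsIn.1 hq
    obtain ⟨hq'a, hq'B', -⟩ := mem_arcsIn.1 hq'
    obtain rfl := eq_of_ideg_eq_one hi1 hq'a hqa
    have hB'B := hB.subset_of_isBiconnectedD hB'.1 haB haB' hqB hq'B'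
      (ne_of_mem_of_acyclic hnet.1 hqa).symm
    have := two_le_odeg hcb (mem_arcsIn.2 ⟨hac, haB, hB'B hcB'⟩) (mem_arcsIn.2 ⟨hab, haB, hbB⟩)
    omega
  · have := hB.ideg_arcsIn_eq_two hnet.1 hnet.2.1 haB hi2 ho1
    omega

end BlobDetermined

theorem treechild_blob_determined_general (E : Finset (A × A))
    (hnet : IsDirBinNet E) :
    (IsTreeChild E →
      ∀ (B : Finset A) (f : A → A), IsBlobD E B → FreshLeaves E B f →
        IsTreeChild (inducedBlobNet E B f)) ∧
    ((∀ B : Finset A, IsBlobD E B →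
        ∃ f : A → A, FreshLeaves E B f ∧ IsTreeChild (inducedBlobNet E B f)) →
      IsTreeChild E) :=
  ⟨fun hTC _ _ hB hfr => isTreeChild_inducedBlobNet hnet hTC hB.1 hB.2.2 hfr,
    isTreeChild_of_isTreeChild_inducedBlobNet hnet⟩

/-- The class of tree-child networks is blob-determined: a directed binary
network is tree-child iff the network induced by each of its blobs is
tree-child. -/
theorem treechild_blob_determined [Infinite A] (E : Finset (A × A))
    (hnet : IsDirBinNet E) :
    (IsTreeChild E →
      ∀ (B : Finset A) (f : A → A), IsBlobD E B → FreshLeaves E B f →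
        IsTreeChild (inducedBlobNet E B f)) ∧
    ((∀ B : Finset A, IsBlobD E B →
        ∃ f : A → A, FreshLeaves E B f ∧ IsTreeChild (inducedBlobNet E B f)) →
      IsTreeChild E) :=
  treechild_blob_determined_general E hnet
end
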